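/- (Lemma 12, Gaussian) Suppose the nonnegative reals R1c, R1p, R2c, R2p are such that (R1c, 0, R1p, R2c, 0, R2p) ∈ R_RHK and the split fully utilizes the interference-free rates, i.e., Rip ≥ ai and Ric ≥ bi for i = 1,2. Then there exist random common rates R1r, R2r ≥ 0 such that (R1c, R1r, R1p, R2c, R2r, R2p) ∈ R_RHK and is self-saturated at both receivers. -/

import Mathlib

open Real

/-- `INRᵖᵢⱼ = min(1, INRᵢⱼ)` if `INRᵢⱼ < SNRᵢ`, and `0` otherwise. -/
noncomputable def INRp (INRij SNRi : ℝ) : ℝ := if INRij < SNRi then min 1 INRij else 0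

/-- `SNRᵖ₁ = SNR₁ · INRᵖ₂₁ / INR₂₁`. -/
noncomputable def SNRp1 (SNR1 SNR2 INR12 INR21 : ℝ) : ℝ :=
  SNR1 * INRp INR21 SNR2 / INR21

/-- `SNRᵖ₂ = SNR₂ · INRᵖ₁₂ / INR₁₂`. -/
noncomputable def SNRp2 (SNR1 SNR2 INR12 INR21 : ℝ) : ℝ :=
  SNR2 * INRp INR12 SNR1 / INR12

/-- Modified MAC constraints at receiver `i` of the Gaussian IC, with parameters
`SNRᵢ`, `INRᵢⱼ`, `INRᵖᵢⱼ`, `SNRᵖᵢ`, on the own common and private rates `Ric, Rip`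
and the other user's common and common-random rates `Rjc, Rjr`
(all logarithms base 2). -/
def gMAC (Si Iij Ipij Spi : ℝ) (Ric Rip Rjc Rjr : ℝ) : Prop :=
  Ric + Rip + Rjc + Rjr ≤ logb 2 (1 + (Si + Iij - Ipij) / (1 + Ipij)) ∧
  Rip + Rjc + Rjr ≤ logb 2 (1 + (Spi + Iij - Ipij) / (1 + Ipij)) ∧
  Rip ≤ logb 2 (1 + Spi / (1 + Ipij)) ∧
  Ric + Rip ≤ logb 2 (1 + Si / (1 + Ipij))

/-- The region `R_RHK`: nonnegative rate tuples `(R1c, R1r, R1p, R2c, R2r, R2p)`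
satisfying the modified MAC constraints at both receivers. -/
noncomputable def gRHK (SNR1 SNR2 INR12 INR21 : ℝ)
    (R1c R1r R1p R2c R2r R2p : ℝ) : Prop :=
  0 ≤ R1c ∧ 0 ≤ R1r ∧ 0 ≤ R1p ∧ 0 ≤ R2c ∧ 0 ≤ R2r ∧ 0 ≤ R2p ∧
  gMAC SNR1 INR12 (INRp INR12 SNR1) (SNRp1 SNR1 SNR2 INR12 INR21) R1c R1p R2c R2r ∧
  gMAC SNR2 INR21 (INRp INR21 SNR2) (SNRp2 SNR1 SNR2 INR12 INR21) R2c R2p R1c R1r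

/-- `Lᵢ = log(1 + SNRᵢ/(1 + INRᵢⱼ))`: rate of user `i` treating interference as noise. -/
noncomputable def gL (Si Iij : ℝ) : ℝ := logb 2 (1 + Si / (1 + Iij))

/-- `aᵢ = log(1 + SNRᵖᵢ/(1 + INRᵢⱼ))`: required private rate of user `i`. -/
noncomputable def ga (Si Iij Spi : ℝ) : ℝ := logb 2 (1 + Spi / (1 + Iij))

/-- `bᵢ = log(1 + (SNRᵢ − SNRᵖᵢ)/(1 + SNRᵖᵢ + INRᵢⱼ))`: required common rate of user `i`. -/
noncomputable def gb (Si Iij Spi : ℝ) : ℝ := logb 2 (1 + (Si - Spi) / (1 + Spi + Iij))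

/-- `Uᵢ`: Gaussian upper bound for user `i` (arguments `SNRᵢ, INRᵢⱼ, SNRⱼ, INRⱼᵢ`). -/
noncomputable def gU (Si Iij Sj Iji : ℝ) : ℝ :=
  min (logb 2 (1 + Si + Iij) -
        logb 2 (1 + max (Sj - max Iji (Sj / Iij)) 0 / (1 + Iji + max Iji (Sj / Iij))))
      (logb 2 (1 + Si))

/-- `C_HK`: rate pairs achievable by non-randomized Han-Kobayashi splits in `R_RHK`. -/
noncomputable def gCHK (SNR1 SNR2 INR12 INR21 : ℝ) (R1 R2 : ℝ) : Prop :=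
  ∃ R1c R1p R2c R2p : ℝ, R1 = R1c + R1p ∧ R2 = R2c + R2p ∧
    gRHK SNR1 SNR2 INR12 INR21 R1c 0 R1p R2c 0 R2p

/-- Self-saturation at receiver 1 of the Gaussian IC. -/
noncomputable def gSelfSat1 (SNR1 SNR2 INR12 INR21 : ℝ) (R1c R1p R2c R2r : ℝ) : Prop :=
  ∀ R1c' R1p' : ℝ, 0 ≤ R1c' → 0 ≤ R1p' → R1c + R1p < R1c' + R1p' →
    ¬ gMAC SNR1 INR12 (INRp INR12 SNR1) (SNRp1 SNR1 SNR2 INR12 INR21) R1c' R1p' R2c R2r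

/-- Self-saturation at receiver 2 of the Gaussian IC. -/
noncomputable def gSelfSat2 (SNR1 SNR2 INR12 INR21 : ℝ) (R2c R2p R1c R1r : ℝ) : Prop :=
  ∀ R2c' R2p' : ℝ, 0 ≤ R2c' → 0 ≤ R2p' → R2c + R2p < R2c' + R2p' →
    ¬ gMAC SNR2 INR21 (INRp INR21 SNR2) (SNRp2 SNR1 SNR2 INR12 INR21) R2c' R2p' R1c R1r

/- Chain rule: at receiver `i`, the bound on `Rip + Rjc + Rjr` plus `bᵢ` equals the bound on
`Ric + Rip + Rjc + Rjr`. Hence once `Ric ≥ bᵢ` the former constraint is implied by the latter,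
and choosing `Rjr` to make the sum-rate constraint tight saturates receiver `i` while keeping
the tuple in the region. -/

lemma INRp_nonneg {I : ℝ} (hI : 0 ≤ I) (S : ℝ) : 0 ≤ INRp I S := by
  unfold INRp
  split_ifs
  · exact le_min zero_le_one hI
  · exact le_rfl

lemma INRp_le {I : ℝ} (hI : 0 ≤ I) (S : ℝ) : INRp I S ≤ I := by
  unfold INRp
  split_ifs
  · exact min_le_right 1 I
  · exact hI

lemma mul_INRp_div_mem_Icc {S I : ℝ} (hS : 0 ≤ S) (hI : 0 ≤ I) (T : ℝ) :
    S * INRp I T / I ∈ Set.Icc 0 S := by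
  refine ⟨by have := INRp_nonneg hI T; positivity, ?_⟩
  rw [mul_div_assoc]
  exact mul_le_of_le_one_right hS (div_le_one_of_le₀ (INRp_le hI T) hI)

lemma logb_private_add_gb {S I Ip Sp : ℝ} (hIp : 0 ≤ Ip) (hIpI : Ip ≤ I) (hSp : 0 ≤ Sp)
    (hSpS : Sp ≤ S) :
    logb 2 (1 + (Sp + I - Ip) / (1 + Ip)) + gb S I Sp =
      logb 2 (1 + (S + I - Ip) / (1 + Ip)) := by
  have h1 : (0 : ℝ) < 1 + Ip := by linarith
  have h2 : (0 : ℝ) < 1 + Sp + I := by linarith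
  have h3 : (0 : ℝ) < 1 + S + I := by linarith
  have e1 : 1 + (Sp + I - Ip) / (1 + Ip) = (1 + Sp + I) / (1 + Ip) := by
    field_simp; ring
  have e2 : 1 + (S + I - Ip) / (1 + Ip) = (1 + S + I) / (1 + Ip) := by
    field_simp; ring
  have e3 : 1 + (S - Sp) / (1 + Sp + I) = (1 + S + I) / (1 + Sp + I) := by
    field_simp; ring
  unfold gb
  rw [e1, e2, e3, ← logb_mul (by positivity) (by positivity)]
  congr 1
  field_simp

lemma exists_saturating_gMAC {S I Ip Sp Rc Rp Rjc : ℝ} (hIp : 0 ≤ Ip) (hIpI : Ip ≤ I)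
    (hSp : 0 ≤ Sp) (hSpS : Sp ≤ S) (hM : gMAC S I Ip Sp Rc Rp Rjc 0) (hb : gb S I Sp ≤ Rc) :
    ∃ Rjr, 0 ≤ Rjr ∧ gMAC S I Ip Sp Rc Rp Rjc Rjr ∧
      ∀ Rc' Rp', Rc + Rp < Rc' + Rp' → ¬ gMAC S I Ip Sp Rc' Rp' Rjc Rjr := by
  obtain ⟨hsum, -, hpriv, hown⟩ := hM
  have hchain := logb_private_add_gb hIp hIpI hSp hSpS
  refine ⟨logb 2 (1 + (S + I - Ip) / (1 + Ip)) - (Rc + Rp + Rjc), by linarith,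
    ⟨by linarith, by linarith, hpriv, hown⟩, fun Rc' Rp' hlt hM' => ?_⟩
  linarith [hM'.1]

theorem stmt13_general (SNR1 SNR2 INR12 INR21 : ℝ)
    (hS1 : 0 < SNR1) (hS2 : 0 < SNR2) (hI12 : 0 < INR12) (hI21 : 0 < INR21)
    (R1c R1p R2c R2p : ℝ)
    (hRHK : gRHK SNR1 SNR2 INR12 INR21 R1c 0 R1p R2c 0 R2p)
    (hb1 : gb SNR1 INR12 (SNRp1 SNR1 SNR2 INR12 INR21) ≤ R1c)
    (hb2 : gb SNR2 INR21 (SNRp2 SNR1 SNR2 INR12 INR21) ≤ R2c) :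
    ∃ R1r R2r : ℝ, 0 ≤ R1r ∧ 0 ≤ R2r ∧
      gRHK SNR1 SNR2 INR12 INR21 R1c R1r R1p R2c R2r R2p ∧
      gSelfSat1 SNR1 SNR2 INR12 INR21 R1c R1p R2c R2r ∧
      gSelfSat2 SNR1 SNR2 INR12 INR21 R2c R2p R1c R1r := by
  obtain ⟨h1c, -, h1p, h2c, -, h2p, hM1, hM2⟩ := hRHK
  have hSp1 := mul_INRp_div_mem_Icc hS1.le hI21.le SNR2
  have hSp2 := mul_INRp_div_mem_Icc hS2.le hI12.le SNR1
  obtain ⟨R2r, h2r, hM1', hsat1⟩ := exists_saturating_gMAC (INRp_nonneg hI12.le SNR1)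
    (INRp_le hI12.le SNR1) hSp1.1 hSp1.2 hM1 hb1
  obtain ⟨R1r, h1r, hM2', hsat2⟩ := exists_saturating_gMAC (INRp_nonneg hI21.le SNR2)
    (INRp_le hI21.le SNR2) hSp2.1 hSp2.2 hM2 hb2
  exact ⟨R1r, R2r, h1r, h2r, ⟨h1c, h1r, h1p, h2c, h2r, h2p, hM1', hM2'⟩,
    fun R1c' R1p' _ _ hlt => hsat1 R1c' R1p' hlt, fun R2c' R2p' _ _ hlt => hsat2 R2c' R2p' hlt⟩

/-- (Lemma 12, Gaussian) If a non-randomized Han-Kobayashi split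
`(R1c, 0, R1p, R2c, 0, R2p) ∈ R_RHK` fully utilizes the interference-free rates
(`Rip ≥ aᵢ`, `Ric ≥ bᵢ`), then there exist random common rates `R1r, R2r ≥ 0` such that
`(R1c, R1r, R1p, R2c, R2r, R2p) ∈ R_RHK` and is self-saturated at both receivers. -/
theorem stmt13 (SNR1 SNR2 INR12 INR21 : ℝ)
    (hS1 : 0 < SNR1) (hS2 : 0 < SNR2) (hI12 : 0 < INR12) (hI21 : 0 < INR21)
    (R1c R1p R2c R2p : ℝ)
    (hRHK : gRHK SNR1 SNR2 INR12 INR21 R1c 0 R1p R2c 0 R2p)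
    (ha1 : ga SNR1 INR12 (SNRp1 SNR1 SNR2 INR12 INR21) ≤ R1p)
    (hb1 : gb SNR1 INR12 (SNRp1 SNR1 SNR2 INR12 INR21) ≤ R1c)
    (ha2 : ga SNR2 INR21 (SNRp2 SNR1 SNR2 INR12 INR21) ≤ R2p)
    (hb2 : gb SNR2 INR21 (SNRp2 SNR1 SNR2 INR12 INR21) ≤ R2c) :
    ∃ R1r R2r : ℝ, 0 ≤ R1r ∧ 0 ≤ R2r ∧
      gRHK SNR1 SNR2 INR12 INR21 R1c R1r R1p R2c R2r R2p ∧
      gSelfSat1 SNR1 SNR2 INR12 INR21 R1c R1p R2c R2r ∧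
      gSelfSat2 SNR1 SNR2 INR12 INR21 R2c R2p R1c R1r :=
  stmt13_general SNR1 SNR2 INR12 INR21 hS1 hS2 hI12 hI21 R1c R1p R2c R2p hRHK hb1 hb2
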